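/- Suppose there exists a bijection σ : P → P such that (x,y,z) ∈ 𝒯 implies (σx, σy, σz) ∈ 𝒯, and such that the cyclic group generated by σ acts simply transitively on P. If q ≢ 1 (mod 3), then the additive order of ε in A_𝒯 is exactly q−1. -/

import Mathlib

/-- A triangle presentation compatible with the bijection `lam : P ≃ L`:
a set of triples satisfying conditions (i), (ii), (iii). -/
structure IsTrianglePresentation {P L : Type*} [Membership P L]
    (lam : P ≃ L) (T : Set (P × P × P)) : Prop where
  exists_iff : ∀ x y : P, (∃ z : P, (x, y, z) ∈ T) ↔ y ∈ lam x
  cyclic : ∀ x y z : P, (x, y, z) ∈ T → (y, z, x) ∈ T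
  unique : ∀ x y z z' : P, (x, y, z) ∈ T → (x, y, z') ∈ T → z = z'

open Classical in
/-- Relators of `A_𝒯`: generators are the points of `P` plus one extra generator
`ε` (encoded as `none : Option P`). -/
def triangleRels {P L : Type*} [Fintype P] [Membership P L]
    (lam : P ≃ L) (T : Set (P × P × P)) : Set (FreeAbelianGroup (Option P)) :=
  (Set.range fun x : P =>
      (∑ y ∈ Finset.univ.filter fun y : P => ¬ y ∈ lam x, FreeAbelianGroup.of (some y))
        - FreeAbelianGroup.of (some x)) ∪
  ((fun t : P × P × P =>
      FreeAbelianGroup.of (some t.1) + FreeAbelianGroup.of (some t.2.1)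
        + FreeAbelianGroup.of (some t.2.2) - FreeAbelianGroup.of (none : Option P)) '' T) ∪
  {(∑ x : P, FreeAbelianGroup.of (some x)) - FreeAbelianGroup.of (none : Option P)}

/-- The abelian group `A_𝒯`, presented by generators `P ∪ {ε}` and the relations above. -/
abbrev TriangleGroup {P L : Type*} [Fintype P] [Membership P L]
    (lam : P ≃ L) (T : Set (P × P × P)) : Type _ :=
  FreeAbelianGroup (Option P) ⧸ AddSubgroup.closure (triangleRels lam T)

/-- The image in `A_𝒯` of the generator corresponding to a point `x ∈ P`. -/
def triangleGen {P L : Type*} [Fintype P] [Membership P L]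
    (lam : P ≃ L) (T : Set (P × P × P)) (x : P) : TriangleGroup lam T :=
  QuotientAddGroup.mk (FreeAbelianGroup.of (some x))

/-- The image in `A_𝒯` of the generator `ε`. -/
def triangleEps {P L : Type*} [Fintype P] [Membership P L]
    (lam : P ≃ L) (T : Set (P × P × P)) : TriangleGroup lam T :=
  QuotientAddGroup.mk (FreeAbelianGroup.of (none : Option P))


/-!
Write `q` for the order of the plane. Summing the relations `∑_{y ∉ λ x} y = x` over all `x`
counts every point `q²` times, since a point lies off `q²` lines; hence `q² • ε = ε`. Summing
`x + y + z = ε` over the `σ`-orbit of one triangle runs each coordinate once through `P`; hence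
`(q² + q + 1) • ε = 3 • ε`. Together `q • ε = ε`, so the order of `ε` divides `q - 1`.
Conversely, sending every point to `1` and `ε` to `3` respects all relations in `ZMod (q - 1)`,
where `q = 1`, and `3` has additive order `q - 1` there when `q % 3 ≠ 1`.
-/

open Finset

namespace Configuration.ProjectivePlane

variable {P L : Type*} [Membership P L] [ProjectivePlane P L]

open Classical in
theorem card_filter_not_mem [Fintype P] [Finite L] (l : L) :
    #{p : P | p ∉ l} = order P L ^ 2 := by
  have h := card_filter_add_card_filter_not (s := (univ : Finset P)) (· ∈ l)
  rw [← Fintype.card_subtype, ← Nat.card_eq_fintype_card, ← pointCount, pointCount_eq,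
    card_univ, card_points P L] at h
  omega

open Classical in
theorem card_filter_not_mem_apply [Fintype P] (e : P ≃ L) (p : P) :
    #{x : P | p ∉ e x} = order P L ^ 2 := by
  have : Finite L := Finite.of_equiv P e
  have hline : Nat.card {x : P // p ∈ e x} = order P L + 1 := by
    rw [← lineCount_eq L p, lineCount]
    exact Nat.card_congr (e.subtypeEquiv fun _ => Iff.rfl)
  have h := card_filter_add_card_filter_not (s := (univ : Finset P)) (p ∈ e ·)
  rw [← Fintype.card_subtype, ← Nat.card_eq_fintype_card, hline, card_univ,
    card_points P L] at h
  omega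

theorem exists_mem [Finite P] [Finite L] (l : L) : ∃ p : P, p ∈ l := by
  have h := two_lt_pointCount P l
  obtain ⟨⟨p, hp⟩⟩ := (Nat.card_pos_iff.mp (by omega : 0 < pointCount P l)).1
  exact ⟨p, hp⟩

end Configuration.ProjectivePlane

theorem Equiv.Perm.sum_range_card_pow_apply {P M : Type*} [Fintype P] [AddCommMonoid M]
    {σ : Equiv.Perm P} (hσ : ∀ p p' : P, ∃! n : ℕ, n < Fintype.card P ∧ (σ ^ n) p = p')
    (f : P → M) (p : P) :
    ∑ n ∈ range (Fintype.card P), f ((σ ^ n) p) = ∑ x, f x := by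
  rw [sum_range fun n => f ((σ ^ n) p)]
  refine Function.Bijective.sum_comp (e := fun n : Fin _ => (σ ^ (n : ℕ)) p) ⟨?_, ?_⟩ f
  · intro a b hab
    obtain ⟨n, -, hn⟩ := hσ p ((σ ^ (a : ℕ)) p)
    exact Fin.ext ((hn a ⟨a.2, rfl⟩).trans (hn b ⟨b.2, hab.symm⟩).symm)
  · intro x
    obtain ⟨n, ⟨hn, hx⟩, -⟩ := hσ p x
    exact ⟨⟨n, hn⟩, hx⟩

section TriangleGroup

variable {P L : Type*} [Fintype P] [Membership P L] (lam : P ≃ L) (T : Set (P × P × P))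

theorem mk_eq_zero_of_mem_triangleRels {r : FreeAbelianGroup (Option P)}
    (hr : r ∈ triangleRels lam T) : (r : TriangleGroup lam T) = 0 :=
  (QuotientAddGroup.eq_zero_iff r).2 (AddSubgroup.subset_closure hr)

open Classical in
theorem sum_triangleGen_filter_not_mem (x : P) :
    ∑ y ∈ univ.filter (fun y : P => ¬ y ∈ lam x), triangleGen lam T y =
      triangleGen lam T x := by
  have h := mk_eq_zero_of_mem_triangleRels lam T (Or.inl (Or.inl ⟨x, rfl⟩))
  rwa [QuotientAddGroup.mk_sub, QuotientAddGroup.mk_sum, sub_eq_zero] at h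

theorem triangleGen_add_add_of_mem {x y z : P} (hxyz : (x, y, z) ∈ T) :
    triangleGen lam T x + triangleGen lam T y + triangleGen lam T z = triangleEps lam T := by
  have h := mk_eq_zero_of_mem_triangleRels lam T (Or.inl (Or.inr ⟨(x, y, z), hxyz, rfl⟩))
  rwa [QuotientAddGroup.mk_sub, QuotientAddGroup.mk_add, QuotientAddGroup.mk_add,
    sub_eq_zero] at h

theorem sum_triangleGen : ∑ x, triangleGen lam T x = triangleEps lam T := by
  have h := mk_eq_zero_of_mem_triangleRels lam T (Or.inr rfl)
  rwa [QuotientAddGroup.mk_sub, QuotientAddGroup.mk_sum, sub_eq_zero] at h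

open Classical in
def triangleLift {G : Type*} [AddCommGroup G] (f : P → G) (e : G)
    (hcompl : ∀ x, ∑ y ∈ univ.filter (fun y : P => ¬ y ∈ lam x), f y = f x)
    (htri : ∀ x y z, (x, y, z) ∈ T → f x + f y + f z = e) (hsum : ∑ x, f x = e) :
    TriangleGroup lam T →+ G :=
  QuotientAddGroup.lift _ (FreeAbelianGroup.lift fun o => o.elim e f) <| by
    refine (AddSubgroup.closure_le _).2 ?_
    rintro r ((⟨x, rfl⟩ | ⟨⟨x, y, z⟩, hxyz, rfl⟩) | rfl)
    · simp [hcompl]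
    · simp [htri _ _ _ hxyz]
    · simp [hsum]

theorem triangleLift_triangleEps {G : Type*} [AddCommGroup G] (f : P → G) (e : G)
    (hcompl htri hsum) :
    triangleLift lam T f e hcompl htri hsum (triangleEps lam T) = e :=
  FreeAbelianGroup.lift_apply_of _ _

open Classical in
theorem nsmul_triangleEps_of_card_filter_not_mem {k : ℕ}
    (hk : ∀ y : P, #{x : P | y ∉ lam x} = k) : k • triangleEps lam T = triangleEps lam T := by
  calc k • triangleEps lam T = ∑ y, #{x : P | y ∉ lam x} • triangleGen lam T y := by
        simp only [hk, ← smul_sum, sum_triangleGen]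
    _ = ∑ x, ∑ y ∈ univ.filter (fun y : P => ¬ y ∈ lam x), triangleGen lam T y := by
        simp only [← sum_const]
        exact sum_comm' (by simp)
    _ = triangleEps lam T := by
        simp only [sum_triangleGen_filter_not_mem, sum_triangleGen]

theorem card_nsmul_triangleEps {σ : Equiv.Perm P}
    (hσT : ∀ x y z : P, (x, y, z) ∈ T → (σ x, σ y, σ z) ∈ T)
    (hσ : ∀ p p' : P, ∃! n : ℕ, n < Fintype.card P ∧ (σ ^ n) p = p') {x y z : P}
    (hxyz : (x, y, z) ∈ T) : Fintype.card P • triangleEps lam T = 3 • triangleEps lam T := by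
  have hpow : ∀ n : ℕ, ((σ ^ n) x, (σ ^ n) y, (σ ^ n) z) ∈ T := by
    intro n
    induction n with
    | zero => exact hxyz
    | succ n ih => simpa only [pow_succ', Equiv.Perm.mul_apply] using hσT _ _ _ ih
  calc Fintype.card P • triangleEps lam T
      = ∑ n ∈ range (Fintype.card P), (triangleGen lam T ((σ ^ n) x)
          + triangleGen lam T ((σ ^ n) y) + triangleGen lam T ((σ ^ n) z)) := by
        simp only [triangleGen_add_add_of_mem lam T (hpow _), sum_const, card_range]
    _ = 3 • triangleEps lam T := by
        simp only [sum_add_distrib, Equiv.Perm.sum_range_card_pow_apply hσ, sum_triangleGen]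
        abel

end TriangleGroup

theorem ZMod.addOrderOf_natCast_of_coprime {a n : ℕ} (ha : a ≠ 0) (h : n.Coprime a) :
    addOrderOf (a : ZMod n) = n := by
  rw [ZMod.addOrderOf_coe' n ha, h.gcd_eq_one, Nat.div_one]

section ProjectivePlane

open Configuration.ProjectivePlane

variable {P L : Type*} [Fintype P] [Membership P L] [Configuration.ProjectivePlane P L]
  {lam : P ≃ L} {T : Set (P × P × P)}

theorem IsTrianglePresentation.nonempty (hT : IsTrianglePresentation lam T) : T.Nonempty := by
  have : Finite L := Finite.of_equiv P lam
  obtain ⟨x, -⟩ := @exists_config P L _ _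
  obtain ⟨y, hy⟩ := exists_mem (P := P) (lam x)
  obtain ⟨z, hz⟩ := (hT.exists_iff x y).2 hy
  exact ⟨(x, y, z), hz⟩

theorem order_nsmul_triangleEps (hT : IsTrianglePresentation lam T) {σ : Equiv.Perm P}
    (hσT : ∀ x y z : P, (x, y, z) ∈ T → (σ x, σ y, σ z) ∈ T)
    (hσ : ∀ p p' : P, ∃! n : ℕ, n < Fintype.card P ∧ (σ ^ n) p = p') :
    order P L • triangleEps lam T = triangleEps lam T := by
  have : Finite L := Finite.of_equiv P lam
  have hsq := nsmul_triangleEps_of_card_filter_not_mem lam T (card_filter_not_mem_apply lam)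
  obtain ⟨⟨x, y, z⟩, hxyz⟩ := hT.nonempty
  have hcard := card_nsmul_triangleEps lam T hσT hσ hxyz
  rw [card_points P L, add_nsmul, add_nsmul, hsq, one_nsmul,
    show 3 • triangleEps lam T = triangleEps lam T + triangleEps lam T + triangleEps lam T by
      abel] at hcard
  exact add_left_cancel (add_right_cancel hcard)

theorem addOrderOf_three_dvd_addOrderOf_triangleEps {n : ℕ} (hn : (order P L : ZMod n) = 1) :
    addOrderOf (3 : ZMod n) ∣ addOrderOf (triangleEps lam T) := by
  have : Finite L := Finite.of_equiv P lam
  let ψ := triangleLift lam T (fun _ => (1 : ZMod n)) 3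
    (fun x => by simp [card_filter_not_mem, hn])
    (fun _ _ _ _ => by norm_num)
    (by norm_num [card_points P L, hn])
  simpa only [ψ, triangleLift_triangleEps] using addOrderOf_map_dvd ψ (triangleEps lam T)

end ProjectivePlane

open Classical in
theorem stmt12_general {P L : Type*} [Fintype P] [Membership P L]
    [Configuration.ProjectivePlane P L] (q : ℕ) (hq : 2 ≤ q)
    (horder : Configuration.ProjectivePlane.order P L = q)
    (lam : P ≃ L) (T : Set (P × P × P)) (hT : IsTrianglePresentation lam T)
    (σ : Equiv.Perm P)
    (hσT : ∀ x y z : P, (x, y, z) ∈ T → (σ x, σ y, σ z) ∈ T)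
    (hσreg : ∀ p p' : P, ∃! n : ℕ, n < Fintype.card P ∧ (σ ^ n) p = p')
    (hq3 : q % 3 ≠ 1) :
    addOrderOf (triangleEps lam T) = q - 1 := by
  have hupper : addOrderOf (triangleEps lam T) ∣ q - 1 := by
    have h := order_nsmul_triangleEps hT hσT hσreg
    rw [horder, ← Nat.sub_add_cancel (by omega : 1 ≤ q), succ_nsmul] at h
    exact addOrderOf_dvd_of_nsmul_eq_zero (add_eq_right.mp h)
  have hlower : q - 1 ∣ addOrderOf (triangleEps lam T) := by
    have hq1 : (q : ZMod (q - 1)) = 1 := by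
      have h := ZMod.natCast_self (q - 1)
      rwa [Nat.cast_sub (by omega), Nat.cast_one, sub_eq_zero] at h
    have h3 := ZMod.addOrderOf_natCast_of_coprime (a := 3) three_ne_zero
      ((Nat.Prime.coprime_iff_not_dvd Nat.prime_three).2 (by omega : ¬ 3 ∣ q - 1)).symm
    rw [Nat.cast_ofNat] at h3
    rw [← h3]
    exact addOrderOf_three_dvd_addOrderOf_triangleEps (by rwa [horder])
  exact Nat.dvd_antisymm hupper hlower

open Classical in
theorem stmt12 {P L : Type*} [Fintype P] [Fintype L] [Membership P L]
    [Configuration.ProjectivePlane P L] (q : ℕ) (hq : 2 ≤ q)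
    (horder : Configuration.ProjectivePlane.order P L = q)
    (lam : P ≃ L) (T : Set (P × P × P)) (hT : IsTrianglePresentation lam T)
    (σ : Equiv.Perm P)
    (hσT : ∀ x y z : P, (x, y, z) ∈ T → (σ x, σ y, σ z) ∈ T)
    (hσreg : ∀ p p' : P, ∃! n : ℕ, n < Fintype.card P ∧ (σ ^ n) p = p')
    (hq3 : q % 3 ≠ 1) :
    addOrderOf (triangleEps lam T) = q - 1 :=
  stmt12_general q hq horder lam T hT σ hσT hσreg hq3
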